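/- Let u : [0,∞) × ℝ → ℝ be a smooth classical solution of (KdV) (i.e. ∂_t u + ∂_x(∂_x² u + u²) = 0 pointwise) such that u(t,·) ∈ 𝒮(ℝ) for every t ≥ 0, all partial derivatives of u are continuous and decay in x faster than any polynomial locally uniformly in t, and sup_{t ≥ 0} ‖u(t)‖_{H¹} < ∞. Then sup_{t ≥ 0} ‖u(t)‖_{H²} < ∞, where ‖f‖_{H²}² = ∫_ℝ (f² + (f′)² + (f″)²) dx. -/

import Mathlib

open MeasureTheory Real

/-- The ground state `Q` for (gKdV): `Q(x) = ((p+1)/(2 cosh²(((p−1)/2)x)))^{1/(p−1)}`. -/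
noncomputable def groundState (p : ℕ) (x : ℝ) : ℝ :=
  (((p : ℝ) + 1) / (2 * Real.cosh (((p : ℝ) - 1) / 2 * x) ^ 2)) ^ ((1 : ℝ) / ((p : ℝ) - 1))

/-- The rescaled soliton profile `Q_c(x) = c^{1/(p−1)} Q(√c x)`. -/
noncomputable def solitonProfile (p : ℕ) (c x : ℝ) : ℝ :=
  c ^ ((1 : ℝ) / ((p : ℝ) - 1)) * groundState p (Real.sqrt c * x)

/-- `‖f‖_{H¹} = (∫ (f² + f′²))^{1/2}`. -/
noncomputable def H1norm (f : ℝ → ℝ) : ℝ :=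
  Real.sqrt (∫ x : ℝ, ((f x) ^ 2 + (deriv f x) ^ 2))

/-- `‖f‖_{H^s} = (Σ_{k=0}^s ∫ (f^{(k)})²)^{1/2}`. -/
noncomputable def HsNorm (s : ℕ) (f : ℝ → ℝ) : ℝ :=
  Real.sqrt (∑ k ∈ Finset.range (s + 1), ∫ x : ℝ, (iteratedDeriv k f x) ^ 2)

/-- Membership in `H¹(ℝ)`: `f` and `f′` are in `L²`. -/
def MemH1 (f : ℝ → ℝ) : Prop :=
  MemLp f 2 volume ∧ MemLp (deriv f) 2 volume

/-- `u` is a smooth classical solution of (gKdV) on the time set `J`: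
`∂_t u + ∂_x(∂_x² u + u^p) = 0` pointwise. -/
def IsGKdVSolutionOn (p : ℕ) (J : Set ℝ) (u : ℝ → ℝ → ℝ) : Prop :=
  ContDiff ℝ (⊤ : ℕ∞) (fun q : ℝ × ℝ => u q.1 q.2) ∧
  ∀ t ∈ J, ∀ x : ℝ,
    deriv (fun s => u s x) t
      + deriv (fun y => iteratedDeriv 2 (u t) y + (u t y) ^ p) x = 0

namespace KdVAux

open Set Filter

noncomputable section

def e1 : ℝ × ℝ := (1, 0)
def e2 : ℝ × ℝ := (0, 1)

lemma norm_e1 : ‖e1‖ = 1 := by simp [e1, Prod.norm_def]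
lemma norm_e2 : ‖e2‖ = 1 := by simp [e2, Prod.norm_def]

/-- spatial directional derivative -/
def dX (f : ℝ × ℝ → ℝ) : ℝ × ℝ → ℝ := fun q => fderiv ℝ f q e2
/-- time directional derivative -/
def dT (f : ℝ × ℝ → ℝ) : ℝ × ℝ → ℝ := fun q => fderiv ℝ f q e1

variable {f : ℝ × ℝ → ℝ}

lemma contDiff_fderiv (hf : ContDiff ℝ (⊤ : ℕ∞) f) : ContDiff ℝ (⊤ : ℕ∞) (fderiv ℝ f) :=
  hf.fderiv_right (by simp)

lemma contDiff_dX (hf : ContDiff ℝ (⊤ : ℕ∞) f) : ContDiff ℝ (⊤ : ℕ∞) (dX f) :=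
  (ContinuousLinearMap.apply ℝ ℝ e2).contDiff.comp (contDiff_fderiv hf)

lemma contDiff_dT (hf : ContDiff ℝ (⊤ : ℕ∞) f) : ContDiff ℝ (⊤ : ℕ∞) (dT f) :=
  (ContinuousLinearMap.apply ℝ ℝ e1).contDiff.comp (contDiff_fderiv hf)

lemma hasDerivAt_sliceX (hf : ContDiff ℝ (⊤ : ℕ∞) f) (t x : ℝ) :
    HasDerivAt (fun y => f (t, y)) (dX f (t, x)) x := by
  have h1 : HasFDerivAt f (fderiv ℝ f (t, x)) (t, x) :=
    (hf.differentiable (by simp) (t, x)).hasFDerivAt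
  have h2 : HasDerivAt (fun y : ℝ => ((t : ℝ), y)) e2 x := by
    simpa [e2] using ((hasDerivAt_const x t).prodMk (hasDerivAt_id x))
  exact h1.comp_hasDerivAt x h2

lemma hasDerivAt_sliceT (hf : ContDiff ℝ (⊤ : ℕ∞) f) (t x : ℝ) :
    HasDerivAt (fun s => f (s, x)) (dT f (t, x)) t := by
  have h1 : HasFDerivAt f (fderiv ℝ f (t, x)) (t, x) :=
    (hf.differentiable (by simp) (t, x)).hasFDerivAt
  have h2 : HasDerivAt (fun s : ℝ => (s, (x : ℝ))) e1 t := by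
    simpa [e1] using ((hasDerivAt_id t).prodMk (hasDerivAt_const t x))
  exact h1.comp_hasDerivAt t h2

/-- fderiv of a directional-derivative function. -/
lemma hasFDerivAt_dX (hf : ContDiff ℝ (⊤ : ℕ∞) f) (q : ℝ × ℝ) :
    HasFDerivAt (dX f) ((ContinuousLinearMap.apply ℝ ℝ e2).comp (fderiv ℝ (fderiv ℝ f) q)) q :=
  ((ContinuousLinearMap.apply ℝ ℝ e2).hasFDerivAt).comp q
    ((contDiff_fderiv hf).differentiable (by simp) q).hasFDerivAt

lemma hasFDerivAt_dT (hf : ContDiff ℝ (⊤ : ℕ∞) f) (q : ℝ × ℝ) :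
    HasFDerivAt (dT f) ((ContinuousLinearMap.apply ℝ ℝ e1).comp (fderiv ℝ (fderiv ℝ f) q)) q :=
  ((ContinuousLinearMap.apply ℝ ℝ e1).hasFDerivAt).comp q
    ((contDiff_fderiv hf).differentiable (by simp) q).hasFDerivAt

/-- Clairaut: `dT (dX f) = dX (dT f)` for smooth `f`. -/
lemma dT_dX (hf : ContDiff ℝ (⊤ : ℕ∞) f) : dT (dX f) = dX (dT f) := by
  funext q
  have hdf : ∀ y, HasFDerivAt f (fderiv ℝ f y) y := fun y =>
    (hf.differentiable (by simp) y).hasFDerivAt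
  have hdf2 : HasFDerivAt (fderiv ℝ f) (fderiv ℝ (fderiv ℝ f) q) q :=
    ((contDiff_fderiv hf).differentiable (by simp) q).hasFDerivAt
  have hsymm := second_derivative_symmetric hdf hdf2 e1 e2
  have hX := (hasFDerivAt_dX hf q).fderiv
  have hT := (hasFDerivAt_dT hf q).fderiv
  show fderiv ℝ (dX f) q e1 = fderiv ℝ (dT f) q e2
  rw [hX, hT]
  simpa using hsymm


/-- `g` is a `k`-th order directional derivative of `f` along unit vectors. -/
def Rep (f g : ℝ × ℝ → ℝ) (k : ℕ) : Prop :=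
  ∃ v : Fin k → ℝ × ℝ, (∀ i, ‖v i‖ = 1) ∧ g = fun q => iteratedFDeriv ℝ k f q v

lemma rep_self : Rep f f 0 :=
  ⟨fun i => i.elim0, fun i => i.elim0, by funext q; rw [iteratedFDeriv_zero_apply]⟩

lemma rep_dT : Rep f (dT f) 1 :=
  ⟨fun _ => e1, fun _ => norm_e1, by funext q; rw [iteratedFDeriv_one_apply]; rfl⟩

lemma rep_dX {g : ℝ × ℝ → ℝ} {k : ℕ} (hf : ContDiff ℝ (⊤ : ℕ∞) f) (h : Rep f g k) :
    Rep f (dX g) (k + 1) := by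
  obtain ⟨v, hv, rfl⟩ := h
  refine ⟨Fin.cons e2 v, ?_, ?_⟩
  · intro i
    refine Fin.cases ?_ ?_ i
    · simpa using norm_e2
    · intro j; simpa using hv j
  · funext q
    have hdiff : HasFDerivAt (iteratedFDeriv ℝ k f)
        (fderiv ℝ (iteratedFDeriv ℝ k f) q) q :=
      (((hf.iteratedFDeriv_right (m := 1) (by exact_mod_cast le_top)).differentiable one_ne_zero) q).hasFDerivAt
    have h1 : HasFDerivAt (fun q' => iteratedFDeriv ℝ k f q' v)
        ((ContinuousMultilinearMap.apply ℝ (fun _ : Fin k => ℝ × ℝ) ℝ v).comp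
          (fderiv ℝ (iteratedFDeriv ℝ k f) q)) q :=
      ((ContinuousMultilinearMap.apply ℝ (fun _ : Fin k => ℝ × ℝ) ℝ v).hasFDerivAt).comp q hdiff
    have : dX (fun q' => iteratedFDeriv ℝ k f q' v) q
        = fderiv ℝ (iteratedFDeriv ℝ k f) q e2 v := by
      show fderiv ℝ (fun q' => iteratedFDeriv ℝ k f q' v) q e2 = _
      rw [h1.fderiv]; rfl
    rw [this, iteratedFDeriv_succ_apply_left]
    simp [Fin.tail_cons]

lemma Rep.norm_le {g : ℝ × ℝ → ℝ} {k : ℕ} (h : Rep f g k) (q : ℝ × ℝ) :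
    |g q| ≤ ‖iteratedFDeriv ℝ k f q‖ := by
  obtain ⟨v, hv, rfl⟩ := h
  calc |iteratedFDeriv ℝ k f q v| ≤ ‖iteratedFDeriv ℝ k f q‖ * ∏ i, ‖v i‖ :=
        (iteratedFDeriv ℝ k f q).le_opNorm v
    _ = ‖iteratedFDeriv ℝ k f q‖ := by simp [hv]


lemma contDiff_dX_iter (hf : ContDiff ℝ (⊤ : ℕ∞) f) (k : ℕ) : ContDiff ℝ (⊤ : ℕ∞) (dX^[k] f) := by
  induction k with
  | zero => simpa using hf
  | succ k ih => rw [Function.iterate_succ_apply']; exact contDiff_dX ih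

lemma rep_dX_iter (hf : ContDiff ℝ (⊤ : ℕ∞) f) (k : ℕ) : Rep f (dX^[k] f) k := by
  induction k with
  | zero => simpa using rep_self
  | succ k ih => rw [Function.iterate_succ_apply']; exact rep_dX hf ih

lemma iteratedDeriv_slice (hf : ContDiff ℝ (⊤ : ℕ∞) f) (k : ℕ) (t : ℝ) :
    iteratedDeriv k (fun y => f (t, y)) = fun x => (dX^[k] f) (t, x) := by
  induction k with
  | zero => simp
  | succ k ih =>
    funext x
    rw [iteratedDeriv_succ, ih, Function.iterate_succ_apply']
    exact (hasDerivAt_sliceX (contDiff_dX_iter hf k) t x).deriv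

lemma integrable_of_decay {g : ℝ → ℝ} (hg : Continuous g) {C : ℝ}
    (h : ∀ x, |g x| ≤ C / (1 + x ^ 2)) : Integrable g := by
  refine (integrable_inv_one_add_sq.const_mul C).mono hg.aestronglyMeasurable ?_
  filter_upwards with x
  rw [Real.norm_eq_abs]
  calc |g x| ≤ C / (1 + x ^ 2) := h x
    _ = C * (1 + x ^ 2)⁻¹ := div_eq_mul_inv _ _
    _ ≤ ‖C * (1 + x ^ 2)⁻¹‖ := le_abs_self _

lemma tendsto_decay_atTop {C : ℝ} :
    Filter.Tendsto (fun x : ℝ => C / (1 + x ^ 2)) Filter.atTop (nhds 0) := by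
  apply Filter.Tendsto.div_atTop (tendsto_const_nhds)
  exact Filter.tendsto_atTop_add_const_left _ _ (tendsto_pow_atTop (by norm_num))

lemma tendsto_decay_atBot {C : ℝ} :
    Filter.Tendsto (fun x : ℝ => C / (1 + x ^ 2)) Filter.atBot (nhds 0) := by
  have := (tendsto_decay_atTop (C := C)).comp tendsto_neg_atBot_atTop
  simpa [Function.comp_def, neg_sq] using this

lemma tendsto_zero_of_decay {g : ℝ → ℝ} {C : ℝ} (h : ∀ x, |g x| ≤ C / (1 + x ^ 2)) :
    Filter.Tendsto g Filter.atTop (nhds 0) ∧ Filter.Tendsto g Filter.atBot (nhds 0) := by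
  constructor
  · exact squeeze_zero_norm (fun x => by simpa using h x) tendsto_decay_atTop
  · exact squeeze_zero_norm (fun x => by simpa using h x) tendsto_decay_atBot

lemma integral_deriv_zero {g g' : ℝ → ℝ} (hd : ∀ x, HasDerivAt g (g' x) x)
    (hint : Integrable g') (htop : Filter.Tendsto g Filter.atTop (nhds 0))
    (hbot : Filter.Tendsto g Filter.atBot (nhds 0)) : ∫ x, g' x = 0 := by
  have h1 : Filter.Tendsto (fun R : ℝ => ∫ x in (-R)..R, g' x) Filter.atTop
      (nhds (∫ x, g' x)) :=
    intervalIntegral_tendsto_integral hint tendsto_neg_atTop_atBot Filter.tendsto_id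
  have h2 : ∀ R : ℝ, ∫ x in (-R)..R, g' x = g R - g (-R) := fun R =>
    intervalIntegral.integral_eq_sub_of_hasDerivAt (fun x _ => hd x)
      (hint.intervalIntegrable)
  have h3 : Filter.Tendsto (fun R : ℝ => g R - g (-R)) Filter.atTop (nhds (0 - 0)) :=
    htop.sub (hbot.comp tendsto_neg_atTop_atBot)
  simp only [h2] at h1
  simpa using tendsto_nhds_unique h1 h3

lemma sq_le_integral {f f' : ℝ → ℝ} (hd : ∀ x, HasDerivAt f (f' x) x)
    (hc : Continuous f') (hbot : Filter.Tendsto f Filter.atBot (nhds 0))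
    (hint : Integrable (fun x => f x ^ 2 + f' x ^ 2)) (x : ℝ) :
    f x ^ 2 ≤ ∫ y, (f y ^ 2 + f' y ^ 2) := by
  set I := ∫ y, (f y ^ 2 + f' y ^ 2) with hI
  have hcf : Continuous f := by
    have hdf : Differentiable ℝ f := fun y => (hd y).differentiableAt
    exact hdf.continuous
  have key : ∀ R : ℝ, -R ≤ x → f x ^ 2 ≤ f (-R) ^ 2 + I := by
    intro R hR
    have hftc : ∫ y in (-R)..x, 2 * f y * f' y = f x ^ 2 - f (-R) ^ 2 := by
      apply intervalIntegral.integral_eq_sub_of_hasDerivAt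
      · intro y _
        have h2 := (hd y).mul (hd y)
        have : 2 * f y * f' y = f' y * f y + f y * f' y := by ring
        rw [this]
        have h3 : HasDerivAt (fun z => f z * f z) (f' y * f y + f y * f' y) y := h2
        simpa [pow_two] using h3
      · exact (((continuous_const.mul hcf).mul hc).intervalIntegrable _ _)
    have hmono : ∫ y in (-R)..x, 2 * f y * f' y ≤ ∫ y in (-R)..x, (f y ^ 2 + f' y ^ 2) := by
      apply intervalIntegral.integral_mono_on hR
        (((continuous_const.mul hcf).mul hc).intervalIntegrable _ _)
        (((hcf.pow 2).add (hc.pow 2)).intervalIntegrable _ _)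
      intro y _
      show 2 * f y * f' y ≤ f y ^ 2 + f' y ^ 2
      nlinarith [sq_nonneg (f y - f' y)]
    have hsub : ∫ y in (-R)..x, (f y ^ 2 + f' y ^ 2) ≤ I := by
      rw [intervalIntegral.integral_of_le hR]
      exact setIntegral_le_integral hint (Filter.Eventually.of_forall fun y => by positivity)
    nlinarith [hftc, hmono, hsub]
  have hlim : Filter.Tendsto (fun R : ℝ => f (-R) ^ 2 + I) Filter.atTop (nhds (0 ^ 2 + I)) := by
    exact (((hbot.comp tendsto_neg_atTop_atBot).pow 2).add tendsto_const_nhds)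
  have : f x ^ 2 ≤ 0 ^ 2 + I := by
    refine ge_of_tendsto hlim ?_
    filter_upwards [Filter.eventually_ge_atTop (-x)] with R hR
    exact key R (by linarith)
  simpa using this

section Main

variable (U : ℝ × ℝ → ℝ)

/-- the `k`-th spatial derivative of `U` -/
def X (k : ℕ) : ℝ × ℝ → ℝ := dX^[k] U
/-- the `k`-th spatial derivative of the time derivative of `U` -/
def Y (k : ℕ) : ℝ × ℝ → ℝ := dX^[k] (dT U)

variable {U}
variable (hU : ContDiff ℝ (⊤ : ℕ∞) U)

lemma X_zero : X U 0 = U := rfl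

lemma X_succ (k : ℕ) : X U (k + 1) = dX (X U k) := Function.iterate_succ_apply' _ _ _

lemma Y_zero : Y U 0 = dT U := rfl

lemma Y_succ (k : ℕ) : Y U (k + 1) = dX (Y U k) := Function.iterate_succ_apply' _ _ _

include hU

lemma contDiff_X (k : ℕ) : ContDiff ℝ (⊤ : ℕ∞) (X U k) := contDiff_dX_iter hU k

lemma contDiff_Y (k : ℕ) : ContDiff ℝ (⊤ : ℕ∞) (Y U k) := contDiff_dX_iter (contDiff_dT hU) k

lemma rep_X (k : ℕ) : Rep U (X U k) k := rep_dX_iter hU k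

lemma rep_Y (k : ℕ) : Rep U (Y U k) (k + 1) := by
  induction k with
  | zero => exact rep_dT
  | succ k ih => rw [Y_succ]; exact rep_dX hU ih

lemma hasDerivAt_X_sliceX (k : ℕ) (t x : ℝ) :
    HasDerivAt (fun y => X U k (t, y)) (X U (k + 1) (t, x)) x := by
  rw [X_succ]; exact hasDerivAt_sliceX (contDiff_X hU k) t x

lemma hasDerivAt_Y_sliceX (k : ℕ) (t x : ℝ) :
    HasDerivAt (fun y => Y U k (t, y)) (Y U (k + 1) (t, x)) x := by
  rw [Y_succ]; exact hasDerivAt_sliceX (contDiff_Y hU k) t x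

lemma dT_X (k : ℕ) : dT (X U k) = Y U k := by
  induction k with
  | zero => rfl
  | succ k ih => rw [X_succ, Y_succ, ← ih, dT_dX (contDiff_X hU k)]

lemma hasDerivAt_X_sliceT (k : ℕ) (t x : ℝ) :
    HasDerivAt (fun s => X U k (s, x)) (Y U k (t, x)) t := by
  rw [← dT_X hU]; exact hasDerivAt_sliceT (contDiff_X hU k) t x

lemma iteratedDeriv_X (k : ℕ) (t : ℝ) :
    iteratedDeriv k (fun y => U (t, y)) = fun x => X U k (t, x) :=
  iteratedDeriv_slice hU k t

lemma continuous_X (k : ℕ) : Continuous (X U k) := (contDiff_X hU k).continuous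

lemma continuous_Y (k : ℕ) : Continuous (Y U k) := (contDiff_Y hU k).continuous

end Main

lemma abs_mul_le {a A b B : ℝ} (ha : |a| ≤ A) (hb : |b| ≤ B) : |a * b| ≤ A * B := by
  rw [abs_mul]
  exact mul_le_mul ha hb (abs_nonneg _) ((abs_nonneg a).trans ha)


section Conserved

variable (U : ℝ × ℝ → ℝ)

/-- density of the second conserved quantity of KdV -/
def FF : ℝ × ℝ → ℝ := fun q =>
  (X U 2 q) ^ 2 - (10/3) * X U 0 q * (X U 1 q) ^ 2 + (5/9) * (X U 0 q) ^ 4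

/-- time derivative of `FF` -/
def dtF : ℝ × ℝ → ℝ := fun q =>
  2 * X U 2 q * Y U 2 q
    - (10/3) * (Y U 0 q * (X U 1 q) ^ 2 + 2 * (X U 0 q * X U 1 q) * Y U 1 q)
    + (20/9) * ((X U 0 q) ^ 3 * Y U 0 q)

/-- flux: an explicit antiderivative in `x` of `dtF` modulo the equation -/
def WW : ℝ × ℝ → ℝ := fun q =>
  -2 * X U 2 q * X U 4 q + (X U 3 q) ^ 2 + (20/3) * (X U 0 q * X U 1 q) * X U 3 q
    - (10/3) * (X U 1 q) ^ 2 * X U 2 q - (16/3) * X U 0 q * (X U 2 q) ^ 2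
    - (20/9) * (X U 0 q) ^ 3 * X U 2 q + 10 * (X U 0 q) ^ 2 * (X U 1 q) ^ 2
    - (8/9) * (X U 0 q) ^ 5

/-- spatial derivative of `WW` -/
def dxW : ℝ × ℝ → ℝ := fun q =>
  (-2)*X U 2 q*X U 5 q + (-12)*X U 1 q*(X U 2 q)^2 + (10/3)*(X U 1 q)^2*X U 3 q
    + (-4)*X U 0 q*X U 2 q*X U 3 q + (20/3)*X U 0 q*X U 1 q*X U 4 q
    + 20*X U 0 q*(X U 1 q)^3 + (40/3)*(X U 0 q)^2*X U 1 q*X U 2 q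
    + (-20/9)*(X U 0 q)^3*X U 3 q + (-40/9)*(X U 0 q)^4*X U 1 q

variable {U}
variable (hU : ContDiff ℝ (⊤ : ℕ∞) U)
include hU

lemma hasDerivAt_FF_sliceT (t x : ℝ) :
    HasDerivAt (fun s => FF U (s, x)) (dtF U (t, x)) t := by
  have h0 := hasDerivAt_X_sliceT hU 0 t x
  have h1 := hasDerivAt_X_sliceT hU 1 t x
  have h2 := hasDerivAt_X_sliceT hU 2 t x
  have H := (((h2.pow 2).sub (((h0.const_mul ((10:ℝ)/3)).mul (h1.pow 2)))).add
    (((h0.pow 4)).const_mul ((5:ℝ)/9)))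
  refine H.congr_deriv ?_
  show _ = dtF U (t, x)
  simp only [dtF]
  push_cast
  simp only [Pi.pow_apply, Pi.mul_apply]
  ring

lemma hasDerivAt_WW_sliceX (t x : ℝ) :
    HasDerivAt (fun y => WW U (t, y)) (dxW U (t, x)) x := by
  have h0 := hasDerivAt_X_sliceX hU 0 t x
  have h1 := hasDerivAt_X_sliceX hU 1 t x
  have h2 := hasDerivAt_X_sliceX hU 2 t x
  have h3 := hasDerivAt_X_sliceX hU 3 t x
  have h4 := hasDerivAt_X_sliceX hU 4 t x
  have H := (((((((((h2.const_mul ((-2:ℝ))).mul h4).add (h3.pow 2)).add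
      ((((h0.mul h1).const_mul ((20:ℝ)/3)).mul h3))).sub
      (((h1.pow 2).const_mul ((10:ℝ)/3)).mul h2)).sub
      (((h0.const_mul ((16:ℝ)/3)).mul (h2.pow 2)))).sub
      (((h0.pow 3).const_mul ((20:ℝ)/9)).mul h2)).add
      (((h0.pow 2).const_mul (10:ℝ)).mul (h1.pow 2))).sub
      ((h0.pow 5).const_mul ((8:ℝ)/9)))
  refine H.congr_deriv ?_
  show _ = dxW U (t, x)
  simp only [dxW]
  push_cast
  simp only [Pi.pow_apply, Pi.mul_apply]
  ring

end Conserved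


section PDE

variable {U : ℝ × ℝ → ℝ}
variable (hU : ContDiff ℝ (⊤ : ℕ∞) U)
variable (hpde : ∀ t ∈ Set.Ici (0:ℝ), ∀ x : ℝ,
  deriv (fun s => U (s, x)) t
    + deriv (fun y => iteratedDeriv 2 (fun z => U (t, z)) y + (U (t, y)) ^ 2) x = 0)
include hU hpde

lemma Y0_eq : ∀ t ≥ (0:ℝ), ∀ x : ℝ,
    Y U 0 (t, x) = -(X U 3 (t, x) + 2 * X U 0 (t, x) * X U 1 (t, x)) := by
  intro t ht x
  have h := hpde t ht x
  have h1 : deriv (fun s => U (s, x)) t = Y U 0 (t, x) :=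
    (hasDerivAt_X_sliceT hU 0 t x).deriv
  have h2 : iteratedDeriv 2 (fun z => U (t, z)) = fun y => X U 2 (t, y) :=
    iteratedDeriv_X hU 2 t
  have h3 : HasDerivAt (fun y => iteratedDeriv 2 (fun z => U (t, z)) y + (U (t, y)) ^ 2)
      (X U 3 (t, x) + 2 * X U 0 (t, x) ^ 1 * X U 1 (t, x)) x := by
    rw [h2]
    exact (hasDerivAt_X_sliceX hU 2 t x).add
      (by
        have h5 : HasDerivAt (fun y => U (t, y) ^ 2) _ x := (hasDerivAt_X_sliceX hU 0 t x).pow 2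
        refine h5.congr_deriv ?_
        simp [X_zero])
  rw [h1, h3.deriv] at h
  rw [pow_one] at h
  linarith

lemma Y1_eq : ∀ t ≥ (0:ℝ), ∀ x : ℝ,
    Y U 1 (t, x) = -(X U 4 (t, x) + 2 * X U 1 (t, x) ^ 2 + 2 * X U 0 (t, x) * X U 2 (t, x)) := by
  intro t ht x
  have hfe : (fun y => Y U 0 (t, y))
      = (fun y => -(X U 3 (t, y) + 2 * X U 0 (t, y) * X U 1 (t, y))) :=
    funext fun y => Y0_eq hU hpde t ht y
  have hL : HasDerivAt (fun y => Y U 0 (t, y)) (Y U 1 (t, x)) x := hasDerivAt_Y_sliceX hU 0 t x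
  rw [hfe] at hL
  have hR : HasDerivAt (fun y => -(X U 3 (t, y) + 2 * X U 0 (t, y) * X U 1 (t, y)))
      (-(X U 4 (t, x) + (2 * X U 1 (t, x) * X U 1 (t, x) + 2 * X U 0 (t, x) * X U 2 (t, x)))) x := by
    have := ((hasDerivAt_X_sliceX hU 3 t x).add
      (((hasDerivAt_X_sliceX hU 0 t x).const_mul (2:ℝ)).mul (hasDerivAt_X_sliceX hU 1 t x))).neg
    refine this.congr_deriv ?_
    ring
  have := hL.unique hR
  rw [this]; ring

lemma Y2_eq : ∀ t ≥ (0:ℝ), ∀ x : ℝ,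
    Y U 2 (t, x) = -(X U 5 (t, x) + 6 * X U 1 (t, x) * X U 2 (t, x)
      + 2 * X U 0 (t, x) * X U 3 (t, x)) := by
  intro t ht x
  have hfe : (fun y => Y U 1 (t, y))
      = (fun y => -(X U 4 (t, y) + 2 * X U 1 (t, y) ^ 2 + 2 * X U 0 (t, y) * X U 2 (t, y))) :=
    funext fun y => Y1_eq hU hpde t ht y
  have hL : HasDerivAt (fun y => Y U 1 (t, y)) (Y U 2 (t, x)) x := hasDerivAt_Y_sliceX hU 1 t x
  rw [hfe] at hL
  have hR : HasDerivAt
      (fun y => -(X U 4 (t, y) + 2 * X U 1 (t, y) ^ 2 + 2 * X U 0 (t, y) * X U 2 (t, y)))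
      (-(X U 5 (t, x) + 6 * X U 1 (t, x) * X U 2 (t, x) + 2 * X U 0 (t, x) * X U 3 (t, x))) x := by
    have := (((hasDerivAt_X_sliceX hU 4 t x).add
        (((hasDerivAt_X_sliceX hU 1 t x).pow 2).const_mul (2:ℝ))).add
      (((hasDerivAt_X_sliceX hU 0 t x).const_mul (2:ℝ)).mul (hasDerivAt_X_sliceX hU 2 t x))).neg
    refine this.congr_deriv ?_
    push_cast
    ring
  exact hL.unique hR

lemma dtF_eq_dxW : ∀ t ≥ (0:ℝ), ∀ x : ℝ, dtF U (t, x) = dxW U (t, x) := by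
  intro t ht x
  simp only [dtF, dxW]
  rw [Y0_eq hU hpde t ht x, Y1_eq hU hpde t ht x, Y2_eq hU hpde t ht x]
  ring

end PDE


lemma abs_term {a b A B d : ℝ} (ha : |a| ≤ A) (hb : |b| ≤ B / d) : |a * b| ≤ A * B / d := by
  rw [abs_mul, mul_div_assoc]
  exact mul_le_mul ha hb (abs_nonneg _) ((abs_nonneg a).trans ha)

section Decay

variable {U : ℝ × ℝ → ℝ}
variable (hU : ContDiff ℝ (⊤ : ℕ∞) U)
variable (hdecay : ∀ n k : ℕ, ∀ t₁ ≥ (0:ℝ), ∀ t₂ ≥ (0:ℝ), ∃ C : ℝ,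
  ∀ t ∈ Set.Icc t₁ t₂, ∀ x : ℝ, |x| ^ k * ‖iteratedFDeriv ℝ n U (t, x)‖ ≤ C)
include hU hdecay

lemma decay2 (n : ℕ) (a b : ℝ) (ha : 0 ≤ a) : ∃ C : ℝ, 0 ≤ C ∧
    ∀ t ∈ Set.Icc a b, ∀ x : ℝ, ‖iteratedFDeriv ℝ n U (t, x)‖ ≤ C / (1 + x ^ 2) := by
  obtain ⟨C0, h0⟩ := hdecay n 0 a ha (max b 0) (le_max_right _ _)
  obtain ⟨C2, h2⟩ := hdecay n 2 a ha (max b 0) (le_max_right _ _)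
  refine ⟨max (C0 + C2) 0, le_max_right _ _, ?_⟩
  intro t ht x
  have ht' : t ∈ Set.Icc a (max b 0) := ⟨ht.1, le_trans ht.2 (le_max_left _ _)⟩
  have e0 := h0 t ht' x
  have e2 := h2 t ht' x
  rw [le_div_iff₀ (by positivity : (0:ℝ) < 1 + x ^ 2)]
  have hx : |x| ^ 2 = x ^ 2 := sq_abs x
  rw [pow_zero, one_mul] at e0
  rw [hx] at e2
  have : ‖iteratedFDeriv ℝ n U (t, x)‖ * (1 + x ^ 2)
      = ‖iteratedFDeriv ℝ n U (t, x)‖ + x ^ 2 * ‖iteratedFDeriv ℝ n U (t, x)‖ := by ring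
  rw [this]
  have := le_max_left (C0 + C2) 0
  linarith

lemma rep_bound {g : ℝ × ℝ → ℝ} {m : ℕ} (hg : Rep U g m) (a b : ℝ) (ha : 0 ≤ a) :
    ∃ C : ℝ, 0 ≤ C ∧ ∀ t ∈ Set.Icc a b, ∀ x : ℝ,
      |g (t, x)| ≤ C / (1 + x ^ 2) ∧ |g (t, x)| ≤ C := by
  obtain ⟨C, hC0, hC⟩ := decay2 hU hdecay m a b ha
  refine ⟨C, hC0, fun t ht x => ?_⟩
  have h1 : |g (t, x)| ≤ C / (1 + x ^ 2) := (hg.norm_le (t, x)).trans (hC t ht x)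
  exact ⟨h1, h1.trans (div_le_self hC0 (by nlinarith [sq_nonneg x]))⟩

/-- one constant bounding `X U 0 .. X U 5` and `Y U 0 .. Y U 2` on a slab -/
lemma slab_bound (a b : ℝ) (ha : 0 ≤ a) : ∃ C : ℝ, 1 ≤ C ∧
    ∀ t ∈ Set.Icc a b, ∀ x : ℝ,
      (∀ k ≤ 5, |X U k (t, x)| ≤ C / (1 + x ^ 2) ∧ |X U k (t, x)| ≤ C) ∧
      (∀ k ≤ 2, |Y U k (t, x)| ≤ C / (1 + x ^ 2) ∧ |Y U k (t, x)| ≤ C) := by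
  have hx : ∀ k : ℕ, ∃ C : ℝ, 0 ≤ C ∧ ∀ t ∈ Set.Icc a b, ∀ x : ℝ,
      |X U k (t, x)| ≤ C / (1 + x ^ 2) ∧ |X U k (t, x)| ≤ C :=
    fun k => rep_bound hU hdecay (rep_X hU k) a b ha
  have hy : ∀ k : ℕ, ∃ C : ℝ, 0 ≤ C ∧ ∀ t ∈ Set.Icc a b, ∀ x : ℝ,
      |Y U k (t, x)| ≤ C / (1 + x ^ 2) ∧ |Y U k (t, x)| ≤ C :=
    fun k => rep_bound hU hdecay (rep_Y hU k) a b ha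
  choose CX hCX0 hCX using hx
  choose CY hCY0 hCY using hy
  set C : ℝ := 1 + ((Finset.range 6).sum CX + (Finset.range 3).sum CY) with hCdef
  have hsumX : ∀ k ≤ 5, CX k ≤ C := by
    intro k hk
    have h1 : CX k ≤ (Finset.range 6).sum CX :=
      Finset.single_le_sum (fun i _ => hCX0 i) (Finset.mem_range.mpr (by omega))
    have h2 : (0:ℝ) ≤ (Finset.range 3).sum CY := Finset.sum_nonneg (fun i _ => hCY0 i)
    simp only [hCdef]; linarith
  have hsumY : ∀ k ≤ 2, CY k ≤ C := by
    intro k hk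
    have h1 : CY k ≤ (Finset.range 3).sum CY :=
      Finset.single_le_sum (fun i _ => hCY0 i) (Finset.mem_range.mpr (by omega))
    have h2 : (0:ℝ) ≤ (Finset.range 6).sum CX := Finset.sum_nonneg (fun i _ => hCX0 i)
    simp only [hCdef]; linarith
  have hC1 : 1 ≤ C := by
    have h1 : (0:ℝ) ≤ (Finset.range 6).sum CX := Finset.sum_nonneg (fun i _ => hCX0 i)
    have h2 : (0:ℝ) ≤ (Finset.range 3).sum CY := Finset.sum_nonneg (fun i _ => hCY0 i)
    simp only [hCdef]; linarith
  refine ⟨C, hC1, fun t ht x => ⟨fun k hk => ?_, fun k hk => ?_⟩⟩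
  · have h := hCX k t ht x
    exact ⟨h.1.trans (by gcongr; exact hsumX k hk), h.2.trans (hsumX k hk)⟩
  · have h := hCY k t ht x
    exact ⟨h.1.trans (by gcongr; exact hsumY k hk), h.2.trans (hsumY k hk)⟩

end Decay


section Bounds

variable {U : ℝ × ℝ → ℝ} {C E : ℝ} {q : ℝ × ℝ}

lemma FF_bound (hX : ∀ k ≤ 5, |X U k q| ≤ E ∧ |X U k q| ≤ C) :
    |FF U q| ≤ C*E + (10/3)*(C*(C*E)) + (5/9)*(C*(C*(C*E))) := by
  obtain ⟨h0d, h0c⟩ := hX 0 (by norm_num)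
  obtain ⟨h1d, h1c⟩ := hX 1 (by norm_num)
  obtain ⟨h2d, h2c⟩ := hX 2 (by norm_num)
  have m1 := abs_le.mp (abs_mul_le h2c h2d)
  have m2 := abs_le.mp (abs_mul_le h0c (abs_mul_le h1c h1d))
  have m3 := abs_le.mp (abs_mul_le h0c (abs_mul_le h0c (abs_mul_le h0c h0d)))
  simp only [FF]
  rw [abs_le]
  constructor
  · linarith [m1.1, m2.2, m3.1]
  · linarith [m1.2, m2.1, m3.2]

lemma dtF_bound (hX : ∀ k ≤ 5, |X U k q| ≤ E ∧ |X U k q| ≤ C)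
    (hY : ∀ k ≤ 2, |Y U k q| ≤ E ∧ |Y U k q| ≤ C) :
    |dtF U q| ≤ 2*(C*E) + (10/3)*(C*(C*E)) + (20/3)*(C*(C*E)) + (20/9)*(C*(C*(C*E))) := by
  obtain ⟨h0d, h0c⟩ := hX 0 (by norm_num)
  obtain ⟨h1d, h1c⟩ := hX 1 (by norm_num)
  obtain ⟨h2d, h2c⟩ := hX 2 (by norm_num)
  obtain ⟨g0d, g0c⟩ := hY 0 (by norm_num)
  obtain ⟨g1d, g1c⟩ := hY 1 (by norm_num)
  obtain ⟨g2d, g2c⟩ := hY 2 (by norm_num)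
  have m1 := abs_le.mp (abs_mul_le h2c g2d)
  have m2 := abs_le.mp (abs_mul_le g0c (abs_mul_le h1c h1d))
  have m3 := abs_le.mp (abs_mul_le h0c (abs_mul_le h1c g1d))
  have m4 := abs_le.mp (abs_mul_le h0c (abs_mul_le h0c (abs_mul_le h0c g0d)))
  simp only [dtF]
  rw [abs_le]
  constructor
  · linarith [m1.1, m2.2, m3.2, m4.1]
  · linarith [m1.2, m2.1, m3.1, m4.2]

lemma WW_bound (hX : ∀ k ≤ 5, |X U k q| ≤ E ∧ |X U k q| ≤ C) :
    |WW U q| ≤ 2*(C*E) + C*E + (20/3)*(C*(C*E)) + (10/3)*(C*(C*E)) + (16/3)*(C*(C*E))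
      + (20/9)*(C*(C*(C*E))) + 10*(C*(C*(C*E))) + (8/9)*(C*(C*(C*(C*E)))) := by
  obtain ⟨h0d, h0c⟩ := hX 0 (by norm_num)
  obtain ⟨h1d, h1c⟩ := hX 1 (by norm_num)
  obtain ⟨h2d, h2c⟩ := hX 2 (by norm_num)
  obtain ⟨h3d, h3c⟩ := hX 3 (by norm_num)
  obtain ⟨h4d, h4c⟩ := hX 4 (by norm_num)
  have m1 := abs_le.mp (abs_mul_le h2c h4d)
  have m2 := abs_le.mp (abs_mul_le h3c h3d)
  have m3 := abs_le.mp (abs_mul_le h0c (abs_mul_le h1c h3d))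
  have m4 := abs_le.mp (abs_mul_le h1c (abs_mul_le h1c h2d))
  have m5 := abs_le.mp (abs_mul_le h0c (abs_mul_le h2c h2d))
  have m6 := abs_le.mp (abs_mul_le h0c (abs_mul_le h0c (abs_mul_le h0c h2d)))
  have m7 := abs_le.mp (abs_mul_le h0c (abs_mul_le h0c (abs_mul_le h1c h1d)))
  have m8 := abs_le.mp (abs_mul_le h0c (abs_mul_le h0c (abs_mul_le h0c (abs_mul_le h0c h0d))))
  simp only [WW]
  rw [abs_le]
  constructor
  · linarith [m1.2, m2.1, m3.1, m4.2, m5.2, m6.2, m7.1, m8.2]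
  · linarith [m1.1, m2.2, m3.2, m4.1, m5.1, m6.1, m7.2, m8.1]

lemma integrable_slice {g : ℝ × ℝ → ℝ} (hg : Continuous g) {t D : ℝ}
    (hb : ∀ x : ℝ, |g (t, x)| ≤ D / (1 + x ^ 2)) : Integrable (fun x => g (t, x)) :=
  integrable_of_decay (hg.comp (Continuous.prodMk_right t)) hb

end Bounds


section Cont

variable {U : ℝ × ℝ → ℝ} (hU : ContDiff ℝ (⊤ : ℕ∞) U)
include hU

lemma continuous_FF : Continuous (FF U) := by
  have c0 := continuous_X hU 0
  have c1 := continuous_X hU 1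
  have c2 := continuous_X hU 2
  exact ((c2.pow 2).sub ((continuous_const.mul c0).mul (c1.pow 2))).add
    (continuous_const.mul (c0.pow 4))

lemma continuous_dtF : Continuous (dtF U) := by
  have c0 := continuous_X hU 0
  have c1 := continuous_X hU 1
  have c2 := continuous_X hU 2
  have g0 := continuous_Y hU 0
  have g1 := continuous_Y hU 1
  have g2 := continuous_Y hU 2
  exact (((continuous_const.mul c2).mul g2).sub
    (continuous_const.mul ((g0.mul (c1.pow 2)).add
      (((continuous_const.mul (c0.mul c1))).mul g1)))).add
    (continuous_const.mul ((c0.pow 3).mul g0))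

lemma continuous_WW : Continuous (WW U) := by
  have c0 := continuous_X hU 0
  have c1 := continuous_X hU 1
  have c2 := continuous_X hU 2
  have c3 := continuous_X hU 3
  have c4 := continuous_X hU 4
  exact ((((((((continuous_const.mul c2).mul c4).add (c3.pow 2)).add
    ((continuous_const.mul (c0.mul c1)).mul c3)).sub
    ((continuous_const.mul (c1.pow 2)).mul c2)).sub
    ((continuous_const.mul c0).mul (c2.pow 2))).sub
    ((continuous_const.mul (c0.pow 3)).mul c2)).add
    ((continuous_const.mul (c0.pow 2)).mul (c1.pow 2))).sub
    (continuous_const.mul (c0.pow 5))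

end Cont

end
end KdVAux

open KdVAux in
/-- a Schwartz solution of (KdV) which is bounded in `H¹` for positive times
is bounded in `H²` for positive times. -/
theorem kdv_H2_bound
    (u : ℝ → ℝ → ℝ) (hu : IsGKdVSolutionOn 2 (Set.Ici (0:ℝ)) u)
    -- all partial derivatives decay in x faster than any polynomial,
    -- locally uniformly in t
    (hdecay : ∀ n k : ℕ, ∀ t₁ ≥ (0:ℝ), ∀ t₂ ≥ (0:ℝ), ∃ C : ℝ,
      ∀ t ∈ Set.Icc t₁ t₂, ∀ x : ℝ,
        |x| ^ k * ‖iteratedFDeriv ℝ n (fun q : ℝ × ℝ => u q.1 q.2) (t, x)‖ ≤ C)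
    (hH1bdd : ∃ M : ℝ, ∀ t ≥ (0:ℝ), H1norm (u t) ≤ M) :
    ∃ M' : ℝ, ∀ t ≥ (0:ℝ), HsNorm 2 (u t) ≤ M' := by
  classical
  obtain ⟨hsm, hpde⟩ := hu
  obtain ⟨M, hM⟩ := hH1bdd
  set U : ℝ × ℝ → ℝ := fun q : ℝ × ℝ => u q.1 q.2 with hUdef
  have hU : ContDiff ℝ (⊤ : ℕ∞) U := hsm
  have hdec : ∀ n k : ℕ, ∀ t₁ ≥ (0:ℝ), ∀ t₂ ≥ (0:ℝ), ∃ C : ℝ,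
      ∀ t ∈ Set.Icc t₁ t₂, ∀ x : ℝ, |x| ^ k * ‖iteratedFDeriv ℝ n U (t, x)‖ ≤ C := hdecay
  have hpde' : ∀ t ∈ Set.Ici (0:ℝ), ∀ x : ℝ,
      deriv (fun s => U (s, x)) t
        + deriv (fun y => iteratedDeriv 2 (fun z => U (t, z)) y + (U (t, y)) ^ 2) x = 0 := hpde
  have hM0 : 0 ≤ M := le_trans (Real.sqrt_nonneg _) (hM 0 le_rfl)
  -- basic L² facts for every t ≥ 0
  have hsupL2 : ∀ t ≥ (0:ℝ), (∀ x : ℝ, |X U 0 (t, x)| ≤ M) ∧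
      (∫ x : ℝ, X U 0 (t, x) ^ 2) + (∫ x : ℝ, X U 1 (t, x) ^ 2) ≤ M ^ 2 ∧
      Integrable (fun x : ℝ => X U 0 (t, x) ^ 2) ∧
      Integrable (fun x : ℝ => X U 1 (t, x) ^ 2) ∧
      (0:ℝ) ≤ (∫ x : ℝ, X U 0 (t, x) ^ 2) ∧ (0:ℝ) ≤ (∫ x : ℝ, X U 1 (t, x) ^ 2) := by
    intro t ht
    obtain ⟨C, hC1, hC⟩ := slab_bound hU hdec t t ht
    have hCt := fun x : ℝ => hC t ⟨le_rfl, le_rfl⟩ x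
    have hint : ∀ k, k ≤ 5 → Integrable (fun x : ℝ => X U k (t, x) ^ 2) := by
      intro k hk
      apply integrable_slice (g := fun q => X U k q ^ 2) ((continuous_X hU k).pow 2)
        (D := C * C)
      intro x
      have h := (hCt x).1 k hk
      calc |X U k (t, x) ^ 2| = |X U k (t, x) * X U k (t, x)| := by rw [sq]
        _ ≤ C * (C / (1 + x ^ 2)) := abs_mul_le h.2 h.1
        _ = C * C / (1 + x ^ 2) := by ring
    have i0 := hint 0 (by norm_num)
    have i1 := hint 1 (by norm_num)
    have hfun : (fun x => (u t x) ^ 2 + (deriv (u t) x) ^ 2)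
        = (fun x => X U 0 (t, x) ^ 2 + X U 1 (t, x) ^ 2) := by
      funext x
      have hd : deriv (u t) x = X U 1 (t, x) := (hasDerivAt_X_sliceX hU 0 t x).deriv
      rw [hd]
      rfl
    have hH1 := hM t ht
    rw [H1norm, hfun] at hH1
    have hnn : 0 ≤ ∫ x : ℝ, (X U 0 (t, x) ^ 2 + X U 1 (t, x) ^ 2) :=
      integral_nonneg fun x => by positivity
    have hsq : (∫ x : ℝ, (X U 0 (t, x) ^ 2 + X U 1 (t, x) ^ 2)) ≤ M ^ 2 := by
      nlinarith [Real.sq_sqrt hnn, Real.sqrt_nonneg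
        (∫ x : ℝ, (X U 0 (t, x) ^ 2 + X U 1 (t, x) ^ 2))]
    have hadd : (∫ x : ℝ, (X U 0 (t, x) ^ 2 + X U 1 (t, x) ^ 2))
        = (∫ x : ℝ, X U 0 (t, x) ^ 2) + ∫ x : ℝ, X U 1 (t, x) ^ 2 := integral_add i0 i1
    have hsup : ∀ x : ℝ, |X U 0 (t, x)| ≤ M := by
      intro x
      have hb : X U 0 (t, x) ^ 2 ≤ ∫ y : ℝ, (X U 0 (t, y) ^ 2 + X U 1 (t, y) ^ 2) :=
        sq_le_integral (f := fun y => X U 0 (t, y)) (f' := fun y => X U 1 (t, y))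
          (fun y => hasDerivAt_X_sliceX hU 0 t y)
          ((continuous_X hU 1).comp (Continuous.prodMk_right t))
          ((tendsto_zero_of_decay (C := C) (fun y => ((hCt y).1 0 (by norm_num)).1)).2)
          (i0.add i1) x
      nlinarith [abs_nonneg (X U 0 (t, x)), sq_abs (X U 0 (t, x))]
    exact ⟨hsup, by linarith, i0, i1,
      integral_nonneg fun x => sq_nonneg _, integral_nonneg fun x => sq_nonneg _⟩
  -- the conserved functional
  set G : ℝ → ℝ := fun t => ∫ x : ℝ, FF U (t, x) with hGdef
  have hGd : ∀ t > (0:ℝ), HasDerivAt G 0 t := by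
    intro t ht
    obtain ⟨C, hC1, hC⟩ := slab_bound hU hdec (t/2) (t+1) (by linarith)
    have hC0 : (0:ℝ) ≤ C := zero_le_one.trans hC1
    set ε : ℝ := min (t/2) 1 with hε
    have hεpos : 0 < ε := lt_min (by linarith) one_pos
    have hball : ∀ s ∈ Metric.ball t ε, s ∈ Set.Icc (t/2) (t+1) := by
      intro s hs
      rw [Metric.mem_ball, Real.dist_eq, abs_lt] at hs
      have h1 : ε ≤ t/2 := min_le_left _ _
      have h2 : ε ≤ 1 := min_le_right _ _
      constructor <;> linarith [hs.1, hs.2]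
    set B : ℝ := 2*(C*C) + (10/3)*(C*(C*C)) + (20/3)*(C*(C*C)) + (20/9)*(C*(C*(C*C))) with hB
    have hmain := hasDerivAt_integral_of_dominated_loc_of_deriv_le (μ := volume)
      (F := fun s x => FF U (s, x)) (F' := fun s x => dtF U (s, x))
      (x₀ := t) (bound := fun x : ℝ => B / (1 + x ^ 2)) (Metric.ball_mem_nhds t hεpos)
      (Filter.Eventually.of_forall fun s =>
        (((continuous_FF hU).comp (Continuous.prodMk_right s)).aestronglyMeasurable))
      ?hFint
      (((continuous_dtF hU).comp (Continuous.prodMk_right t)).aestronglyMeasurable)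
      ?hbound ?hbint ?hdiff
    case hFint =>
      apply integrable_slice (continuous_FF hU)
        (D := C*C + (10/3)*(C*(C*C)) + (5/9)*(C*(C*(C*C))))
      intro x
      have h := hC t ⟨by linarith, by linarith⟩ x
      refine (FF_bound (E := C/(1+x^2)) h.1).trans_eq ?_
      ring
    case hbound =>
      refine Filter.Eventually.of_forall fun x => fun s hs => ?_
      have h := hC s (hball s hs) x
      rw [Real.norm_eq_abs]
      refine (dtF_bound (E := C/(1+x^2)) h.1 h.2).trans_eq ?_
      rw [hB]
      ring
    case hbint =>
      have he : (fun x : ℝ => B/(1+x^2)) = fun x : ℝ => B * (1+x^2)⁻¹ :=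
        funext fun x => div_eq_mul_inv _ _
      rw [he]
      exact integrable_inv_one_add_sq.const_mul B
    case hdiff =>
      exact Filter.Eventually.of_forall fun x => fun s _ => hasDerivAt_FF_sliceT hU s x
    have hcong : (fun x => dtF U (t, x)) = fun x => dxW U (t, x) :=
      funext fun x => dtF_eq_dxW hU hpde' t ht.le x
    have hWdec : ∀ x : ℝ, |WW U (t, x)|
        ≤ (2*(C*C) + C*C + (20/3)*(C*(C*C)) + (10/3)*(C*(C*C)) + (16/3)*(C*(C*C))
          + (20/9)*(C*(C*(C*C))) + 10*(C*(C*(C*C))) + (8/9)*(C*(C*(C*(C*C))))) / (1+x^2) := by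
      intro x
      have h := hC t ⟨by linarith, by linarith⟩ x
      refine (WW_bound (E := C/(1+x^2)) h.1).trans_eq ?_
      ring
    have hWten := tendsto_zero_of_decay hWdec
    have hzero : (∫ x : ℝ, dtF U (t, x)) = 0 := by
      rw [hcong]
      refine integral_deriv_zero (g := fun x => WW U (t, x))
        (fun x => hasDerivAt_WW_sliceX hU t x) ?_ hWten.1 hWten.2
      rw [← hcong]
      exact hmain.1
    have hfin := hmain.2
    rw [hzero] at hfin
    exact hfin
  have hGc : ∀ t > (0:ℝ), G t = G 1 := by
    have key : ∀ a b : ℝ, 0 < a → a ≤ b → G b = G a := by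
      intro a b ha hab
      have hcont : ContinuousOn G (Set.Icc a b) := fun s hs =>
        ((hGd s (lt_of_lt_of_le ha hs.1)).continuousAt).continuousWithinAt
      have hder : ∀ s ∈ Set.Ico a b, HasDerivWithinAt G 0 (Set.Ici s) s := fun s hs =>
        ((hGd s (lt_of_lt_of_le ha hs.1)).hasDerivWithinAt)
      exact constant_of_has_deriv_right_zero hcont hder b (Set.right_mem_Icc.mpr hab)
    intro t ht
    rcases le_total t 1 with h | h
    · exact (key t 1 ht h).symm
    · exact key 1 t one_pos h
  have hX2 : ∀ t > (0:ℝ), (∫ x : ℝ, X U 2 (t, x) ^ 2) ≤ G 1 + (10/3) * (M * M ^ 2) := by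
    intro t ht
    obtain ⟨C, hC1, hC⟩ := slab_bound hU hdec t t ht.le
    have hCt := fun x : ℝ => hC t ⟨le_rfl, le_rfl⟩ x
    obtain ⟨hsup, hL2, i0, i1, hnn0, hnn1⟩ := hsupL2 t ht.le
    have i2 : Integrable (fun x : ℝ => X U 2 (t, x) ^ 2) := by
      apply integrable_slice (g := fun q => X U 2 q ^ 2) ((continuous_X hU 2).pow 2)
        (D := C * C)
      intro x
      have h := (hCt x).1 2 (by norm_num)
      calc |X U 2 (t, x) ^ 2| = |X U 2 (t, x) * X U 2 (t, x)| := by rw [sq]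
        _ ≤ C * (C / (1 + x ^ 2)) := abs_mul_le h.2 h.1
        _ = C * C / (1 + x ^ 2) := by ring
    have i01 : Integrable (fun x : ℝ => X U 0 (t, x) * X U 1 (t, x) ^ 2) := by
      apply integrable_slice (g := fun q => X U 0 q * X U 1 q ^ 2)
        ((continuous_X hU 0).mul ((continuous_X hU 1).pow 2)) (D := C * (C * C))
      intro x
      have h0 := (hCt x).1 0 (by norm_num)
      have h1 := (hCt x).1 1 (by norm_num)
      calc |X U 0 (t, x) * X U 1 (t, x) ^ 2|
          = |X U 0 (t, x) * (X U 1 (t, x) * X U 1 (t, x))| := by rw [sq]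
        _ ≤ C * (C * (C / (1 + x ^ 2))) := abs_mul_le h0.2 (abs_mul_le h1.2 h1.1)
        _ = C * (C * C) / (1 + x ^ 2) := by ring
    have i04 : Integrable (fun x : ℝ => X U 0 (t, x) ^ 4) := by
      apply integrable_slice (g := fun q => X U 0 q ^ 4) ((continuous_X hU 0).pow 4)
        (D := C * (C * (C * C)))
      intro x
      have h0 := (hCt x).1 0 (by norm_num)
      calc |X U 0 (t, x) ^ 4|
          = |X U 0 (t, x) * (X U 0 (t, x) * (X U 0 (t, x) * X U 0 (t, x)))| := by ring_nf
        _ ≤ C * (C * (C * (C / (1 + x ^ 2)))) :=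
            abs_mul_le h0.2 (abs_mul_le h0.2 (abs_mul_le h0.2 h0.1))
        _ = C * (C * (C * C)) / (1 + x ^ 2) := by ring
    have hFsplit : G t = (∫ x : ℝ, X U 2 (t, x) ^ 2)
        - (10/3) * (∫ x : ℝ, X U 0 (t, x) * X U 1 (t, x) ^ 2)
        + (5/9) * ∫ x : ℝ, X U 0 (t, x) ^ 4 := by
      have e : (fun x : ℝ => FF U (t, x))
          = fun x : ℝ => (X U 2 (t, x) ^ 2 - (10/3) * (X U 0 (t, x) * X U 1 (t, x) ^ 2))
            + (5/9) * X U 0 (t, x) ^ 4 := funext fun x => by simp only [FF]; ring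
      show (∫ x : ℝ, FF U (t, x)) = _
      rw [e]
      have h1 : (∫ x : ℝ, (X U 2 (t, x) ^ 2 - 10/3 * (X U 0 (t, x) * X U 1 (t, x) ^ 2)
            + 5/9 * X U 0 (t, x) ^ 4))
          = (∫ x : ℝ, (X U 2 (t, x) ^ 2 - 10/3 * (X U 0 (t, x) * X U 1 (t, x) ^ 2)))
            + ∫ x : ℝ, 5/9 * X U 0 (t, x) ^ 4 :=
        integral_add (i2.sub (i01.const_mul _)) (i04.const_mul _)
      have h2 : (∫ x : ℝ, (X U 2 (t, x) ^ 2 - 10/3 * (X U 0 (t, x) * X U 1 (t, x) ^ 2)))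
          = (∫ x : ℝ, X U 2 (t, x) ^ 2) - ∫ x : ℝ, 10/3 * (X U 0 (t, x) * X U 1 (t, x) ^ 2) :=
        integral_sub i2 (i01.const_mul _)
      rw [h1, h2, integral_const_mul, integral_const_mul]
    have hm2 : (∫ x : ℝ, X U 0 (t, x) * X U 1 (t, x) ^ 2) ≤ M * M ^ 2 := by
      have hmono : ∀ x : ℝ, X U 0 (t, x) * X U 1 (t, x) ^ 2 ≤ M * X U 1 (t, x) ^ 2 := by
        intro x
        nlinarith [sq_nonneg (X U 1 (t, x)), abs_le.mp (hsup x)]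
      calc (∫ x : ℝ, X U 0 (t, x) * X U 1 (t, x) ^ 2)
          ≤ ∫ x : ℝ, M * X U 1 (t, x) ^ 2 := integral_mono i01 (i1.const_mul M) hmono
        _ = M * ∫ x : ℝ, X U 1 (t, x) ^ 2 := integral_const_mul _ _
        _ ≤ M * M ^ 2 := mul_le_mul_of_nonneg_left (by linarith) hM0
    have hm3 : (0:ℝ) ≤ ∫ x : ℝ, X U 0 (t, x) ^ 4 :=
      integral_nonneg fun x => by positivity
    have hGt := hGc t ht
    linarith
  -- conclusion
  have hfinal : ∀ t > (0:ℝ), HsNorm 2 (u t)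
      ≤ Real.sqrt (M ^ 2 + (G 1 + (10/3) * (M * M ^ 2))) := by
    intro t ht
    obtain ⟨hsup, hL2, i0, i1, hnn0, hnn1⟩ := hsupL2 t ht.le
    have h2 := hX2 t ht
    have e0 : iteratedDeriv 0 (u t) = fun x => X U 0 (t, x) := iteratedDeriv_X hU 0 t
    have e1 : iteratedDeriv 1 (u t) = fun x => X U 1 (t, x) := iteratedDeriv_X hU 1 t
    have e2 : iteratedDeriv 2 (u t) = fun x => X U 2 (t, x) := iteratedDeriv_X hU 2 t
    have hHs : HsNorm 2 (u t) = Real.sqrt ((∫ x : ℝ, X U 0 (t, x) ^ 2)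
        + (∫ x : ℝ, X U 1 (t, x) ^ 2) + (∫ x : ℝ, X U 2 (t, x) ^ 2)) := by
      rw [HsNorm]
      congr 1
      rw [Finset.sum_range_succ, Finset.sum_range_succ, Finset.sum_range_one, e0, e1, e2]
    rw [hHs]
    apply Real.sqrt_le_sqrt
    linarith
  refine ⟨max (HsNorm 2 (u 0)) (Real.sqrt (M ^ 2 + (G 1 + (10/3) * (M * M ^ 2)))), ?_⟩
  intro t ht
  rcases eq_or_lt_of_le ht with h | h
  · rw [← h]; exact le_max_left _ _
  · exact (hfinal t h).trans (le_max_right _ _)
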